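/- Consider the switched quantized control system with parameter α satisfying 1 < α < 3/2 and disturbance rounding error Δ_d with 0 < |Δ_d| ≤ 1/2. If at some time k the state satisfies condition (9), then the set {(0,0), (sign(Δ_d), −sign(Δ_d))} is the smallest invariant set for the quantized state: for every H ∈ ℕ there exist integers h > H and h' > H such that (ρ(e(k+h)), ρ(ū(k+h))) = (0, 0) and (ρ(e(k+h')), ρ(ū(k+h'))) = (sign(Δ_d), −sign(Δ_d)); that is, both points of the set are visited at infinitely many times. -/

import Mathlib

/-- Sign function: 1 for positive, 0 for zero, -1 for negative. -/
noncomputable def rsign (z : ℝ) : ℤ :=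
  if 0 < z then 1 else if z = 0 then 0 else -1

/-- Rounding operator: rounds to the nearest integer, ties away from zero. -/
noncomputable def rho (z : ℝ) : ℤ :=
  if Int.fract |z| < 1/2 then rsign z * ⌊|z|⌋ else rsign z * (⌊|z|⌋ + 1)

/-- The switched quantized control system with parameter `α` and disturbance
rounding error `Δd`, with state trajectory `(e, u)`. -/
def Traj (α Δd : ℝ) (e u : ℕ → ℝ) : Prop :=
  ∀ k : ℕ,
    e (k+1) = e k + (rho (u k) : ℝ) + Δd ∧
    u (k+1) = if rho (e (k+1)) = 0
      then ((rho (u k) : ℝ) + (rho (e k) : ℝ))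
      else (u k + (rho (e k) : ℝ) - α * (rho (e (k+1)) : ℝ))

/-- Condition (9) at time `k`. -/
def Cond9 (α Δd : ℝ) (e u : ℕ → ℝ) (k : ℕ) : Prop :=
  (-(1/2) < e k ∧ e k < 1/2) ∧
  (1 ≤ α - u k * (rsign Δd : ℝ) ∧ α - u k * (rsign Δd : ℝ) < 3/2) ∧
  (-(1/2) < u k ∧ u k < 1/2)

/-! For `Δd > 0`, condition (9) forces `ρ(e) = ρ(ū) = 0`, and as long as it persists `ū` is reset
to `0` while `e` drifts up by `Δd` per step. So `e` eventually enters `[1/2, 1)`: the quantized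
state is then `(1, -1)`, and one step later `ū = 0`, `|e| < 1/2`, i.e. condition (9) holds again.
Hence the two points alternate forever. Negating `(e, ū, Δd)` maps trajectories to trajectories
and preserves condition (9), which reduces `Δd < 0` to `Δd > 0`. -/

open Filter

lemma rsign_of_pos {z : ℝ} (h : 0 < z) : rsign z = 1 := by simp [rsign, h]

lemma rsign_of_neg {z : ℝ} (h : z < 0) : rsign z = -1 := by
  simp [rsign, h.not_gt, h.ne]

lemma rsign_neg (z : ℝ) : rsign (-z) = -rsign z := by
  rcases lt_trichotomy z 0 with h | rfl | h
  · rw [rsign_of_neg h, rsign_of_pos (neg_pos.mpr h), neg_neg]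
  · simp [rsign]
  · rw [rsign_of_pos h, rsign_of_neg (neg_neg_iff_pos.mpr h)]

lemma rho_eq_rsign_mul_round (z : ℝ) : rho z = rsign z * round |z| := by
  have hz := Int.floor_add_fract |z|
  have h₀ := Int.fract_nonneg |z|
  have h₁ := Int.fract_lt_one |z|
  unfold rho
  split_ifs with h
  · rw [(round_eq_iff.mpr ⟨by linarith, by linarith⟩ : round |z| = ⌊|z|⌋)]
  · rw [(round_eq_iff.mpr ⟨by push_cast; linarith, by push_cast; linarith⟩ :
      round |z| = ⌊|z|⌋ + 1)]

lemma rho_neg (z : ℝ) : rho (-z) = -rho z := by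
  rw [rho_eq_rsign_mul_round, rho_eq_rsign_mul_round, rsign_neg, abs_neg, neg_mul]

lemma rho_eq_zero_of_abs_lt {z : ℝ} (h : |z| < 1/2) : rho z = 0 := by
  rw [rho_eq_rsign_mul_round, round_eq_zero_iff.mpr ⟨by linarith [abs_nonneg z], h⟩, mul_zero]

lemma rho_eq_one {z : ℝ} (h₁ : 1/2 ≤ z) (h₂ : z < 3/2) : rho z = 1 := by
  have hz : 0 < z := by linarith
  rw [rho_eq_rsign_mul_round, rsign_of_pos hz, abs_of_pos hz,
    (round_eq_iff (n := 1)).mpr ⟨by norm_num; linarith, by norm_num; linarith⟩, one_mul]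

lemma rho_eq_neg_one {z : ℝ} (h₁ : -(3/2) < z) (h₂ : z ≤ -(1/2)) : rho z = -1 := by
  rw [← neg_neg z, rho_neg, rho_eq_one (by linarith) (by linarith)]

lemma Traj.neg {α Δd : ℝ} {e u : ℕ → ℝ} (ht : Traj α Δd e u) : Traj α (-Δd) (-e) (-u) := by
  intro k
  obtain ⟨he, hu⟩ := ht k
  simp only [Pi.neg_apply, rho_neg, neg_eq_zero, Int.cast_neg, he, hu]
  constructor
  · ring
  · split_ifs <;> ring

lemma Cond9.neg {α Δd : ℝ} {e u : ℕ → ℝ} {k : ℕ} (h : Cond9 α Δd e u k) :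
    Cond9 α (-Δd) (-e) (-u) k := by
  obtain ⟨⟨he₁, he₂⟩, ⟨ha₁, ha₂⟩, hu₁, hu₂⟩ := h
  simp only [Cond9, Pi.neg_apply, rsign_neg, Int.cast_neg, neg_mul_neg]
  exact ⟨⟨by linarith, by linarith⟩, ⟨ha₁, ha₂⟩, by linarith, by linarith⟩

lemma Cond9.rho_eq_zero {α Δd : ℝ} {e u : ℕ → ℝ} {k : ℕ} (h : Cond9 α Δd e u k) :
    rho (e k) = 0 ∧ rho (u k) = 0 :=
  ⟨rho_eq_zero_of_abs_lt (abs_lt.mpr h.1), rho_eq_zero_of_abs_lt (abs_lt.mpr h.2.2)⟩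

theorem frequently_of_forall_exists_gt {P Q : ℕ → Prop}
    (h : ∀ k, P k → ∃ j > k, Q j ∧ P (j + 1)) {k : ℕ} (hk : P k) :
    ∃ᶠ n in atTop, Q n ∧ P (n + 1) := by
  rw [frequently_atTop]
  intro a
  induction a with
  | zero => obtain ⟨j, -, hj⟩ := h k hk; exact ⟨j, j.zero_le, hj⟩
  | succ a ih =>
    obtain ⟨b, hab, -, hb⟩ := ih
    obtain ⟨j, hbj, hj⟩ := h (b + 1) hb
    exact ⟨j, by omega, hj⟩

section PositiveDisturbance

variable {α Δd : ℝ} {e u : ℕ → ℝ}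

lemma cond9_of_eq_zero (hα₁ : 1 ≤ α) (hα₂ : α < 3/2) {k : ℕ}
    (he : |e k| < 1/2) (hu : u k = 0) : Cond9 α Δd e u k := by
  rw [abs_lt] at he
  simp only [Cond9, hu, zero_mul, sub_zero]
  exact ⟨he, ⟨hα₁, hα₂⟩, by norm_num, by norm_num⟩

lemma Traj.cond9_succ_or_jump (ht : Traj α Δd e u) (hα₁ : 1 ≤ α) (hα₂ : α < 3/2)
    (hΔ₀ : 0 < Δd) (hΔ : Δd ≤ 1/2) {k : ℕ} (h9 : Cond9 α Δd e u k) :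
    (Cond9 α Δd e u (k + 1) ∧ e (k + 1) = e k + Δd) ∨
      (rho (e (k + 1)) = 1 ∧ rho (u (k + 1)) = -1 ∧ Cond9 α Δd e u (k + 2)) := by
  obtain ⟨hre, hru⟩ := h9.rho_eq_zero
  obtain ⟨⟨he₁, he₂⟩, ⟨ha₁, ha₂⟩, -⟩ := h9
  rw [rsign_of_pos hΔ₀, Int.cast_one, mul_one] at ha₁ ha₂
  obtain ⟨he', hu'⟩ := ht k
  rw [hru, Int.cast_zero, add_zero] at he'
  by_cases hstay : e k + Δd < 1/2
  · have hre' : rho (e (k + 1)) = 0 :=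
      rho_eq_zero_of_abs_lt (abs_lt.mpr ⟨by linarith, by linarith⟩)
    rw [if_pos hre', hru, hre, Int.cast_zero, add_zero] at hu'
    exact Or.inl ⟨cond9_of_eq_zero hα₁ hα₂ (abs_lt.mpr ⟨by linarith, by linarith⟩) hu', he'⟩
  · have hre' : rho (e (k + 1)) = 1 := rho_eq_one (by linarith) (by linarith)
    rw [if_neg (by rw [hre']; norm_num), hre, hre', Int.cast_zero, Int.cast_one] at hu'
    have hru' : rho (u (k + 1)) = -1 := rho_eq_neg_one (by linarith) (by linarith)
    obtain ⟨he'', hu''⟩ := ht (k + 1)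
    rw [hru', Int.cast_neg, Int.cast_one] at he''
    have hre'' : rho (e (k + 2)) = 0 :=
      rho_eq_zero_of_abs_lt (abs_lt.mpr ⟨by linarith, by linarith⟩)
    rw [if_pos hre'', hru', hre'] at hu''
    refine Or.inr ⟨hre', hru', cond9_of_eq_zero hα₁ hα₂
      (abs_lt.mpr ⟨by linarith, by linarith⟩) (by rw [hu'']; norm_num)⟩

lemma Traj.exists_jump (ht : Traj α Δd e u) (hα₁ : 1 ≤ α) (hα₂ : α < 3/2)
    (hΔ₀ : 0 < Δd) (hΔ : Δd ≤ 1/2) {k : ℕ} (h9 : Cond9 α Δd e u k) :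
    ∃ j > k, rho (e j) = 1 ∧ rho (u j) = -1 ∧ Cond9 α Δd e u (j + 1) := by
  by_contra! hno
  have hdrift : ∀ n : ℕ, Cond9 α Δd e u (k + n) ∧ e (k + n) = e k + n * Δd := by
    intro n
    induction n with
    | zero => simpa using h9
    | succ n ih =>
      rcases ht.cond9_succ_or_jump hα₁ hα₂ hΔ₀ hΔ ih.1 with ⟨h9', he'⟩ | ⟨hre, hru, h9'⟩
      · refine ⟨h9', ?_⟩
        rw [← add_assoc, he', ih.2]
        push_cast
        ring
      · exact absurd h9' (hno (k + n + 1) (by omega) hre hru)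
  obtain ⟨n, hn⟩ := exists_nat_gt (1 / Δd)
  have hnΔ : 1 < n * Δd := by rwa [div_lt_iff₀ hΔ₀] at hn
  obtain ⟨h9n, hen⟩ := hdrift n
  linarith [h9.1.1, h9n.1.2]

lemma Traj.frequently_jump_of_pos (ht : Traj α Δd e u) (hα₁ : 1 ≤ α) (hα₂ : α < 3/2)
    (hΔ₀ : 0 < Δd) (hΔ : Δd ≤ 1/2) {k : ℕ} (h9 : Cond9 α Δd e u k) :
    ∃ᶠ n in atTop, (rho (e n) = 1 ∧ rho (u n) = -1) ∧
      rho (e (n + 1)) = 0 ∧ rho (u (n + 1)) = 0 := by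
  refine (frequently_of_forall_exists_gt (Q := fun n => rho (e n) = 1 ∧ rho (u n) = -1) ?_
    h9).mono fun n hn => ⟨hn.1, hn.2.rho_eq_zero⟩
  intro m hm
  obtain ⟨j, hmj, hre, hru, h9'⟩ := ht.exists_jump hα₁ hα₂ hΔ₀ hΔ hm
  exact ⟨j, hmj, ⟨hre, hru⟩, h9'⟩

end PositiveDisturbance

theorem stmt_1 (α Δd : ℝ) (hα : 1 < α ∧ α < 3/2) (hΔ : 0 < |Δd| ∧ |Δd| ≤ 1/2)
    (e u : ℕ → ℝ) (htraj : Traj α Δd e u) (k : ℕ) (h9 : Cond9 α Δd e u k) :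
    ∀ H : ℕ,
      (∃ h : ℕ, H < h ∧
        (rho (e (k+h)), rho (u (k+h))) = ((0 : ℤ), (0 : ℤ))) ∧
      (∃ h' : ℕ, H < h' ∧
        (rho (e (k+h')), rho (u (k+h'))) = (rsign Δd, -rsign Δd)) := by
  obtain ⟨hα₁, hα₂⟩ := hα
  have hfreq : ∃ᶠ n in atTop, (rho (e n) = rsign Δd ∧ rho (u n) = -rsign Δd) ∧
      rho (e (n + 1)) = 0 ∧ rho (u (n + 1)) = 0 := by
    rcases (abs_pos.mp hΔ.1).lt_or_gt with hneg | hpos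
    · rw [abs_of_neg hneg] at hΔ
      refine (htraj.neg.frequently_jump_of_pos hα₁.le hα₂ (by linarith) hΔ.2 h9.neg).mono
        fun n hn => ?_
      simp only [Pi.neg_apply, rho_neg, neg_eq_zero, neg_inj] at hn
      rw [rsign_of_neg hneg]
      omega
    · rw [abs_of_pos hpos] at hΔ
      rw [rsign_of_pos hpos]
      exact htraj.frequently_jump_of_pos hα₁.le hα₂ hpos hΔ.2 h9
  intro H
  obtain ⟨n, hn, hjump, hrest⟩ := frequently_atTop.mp hfreq (k + H + 1)
  refine ⟨⟨n + 1 - k, by omega, ?_⟩, ⟨n - k, by omega, ?_⟩⟩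
  · rw [show k + (n + 1 - k) = n + 1 by omega, hrest.1, hrest.2]
  · rw [show k + (n - k) = n by omega, hjump.1, hjump.2]
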